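/- There exists an absolute constant c₄ > 0 such that the following holds. Let n be an even positive integer and let M be an m×n random matrix, n/2 ≤ m ≤ n, whose rows are independent, each uniformly distributed over the set of vectors in {-1,0,1}^n having exactly n/2 zero coordinates. Then for any fixed v ∈ S^{n-1}, P( ‖Mv‖₂ ≤ √n/4 ) ≤ 2 e^{-c₄ n}. -/

import Mathlib

/-!
A row `x` is invariant under flipping the sign of any coordinate, has `|xᵢ| ≤ 1` and, by symmetry
under permutations, `E xᵢ² = 1/2`. Hence `S = ⟨x, v⟩` has `E S² = 1/2`, while the sign symmetry
kills all odd monomials and gives the Khintchine-type bound `E S⁴ ≤ 3 E (∑ vᵢ² xᵢ²)² ≤ 3/2`.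
From `e⁻ᵗ ≤ 1 - t + t²` we get `E exp(-S²/6) ≤ 1 - 1/12 + 1/24 ≤ e^{-1/24}`, and the Chernoff bound
for the independent rows yields `P(‖Mv‖² ≤ n/16) ≤ e^{n/96} e^{-m/24} ≤ e^{-n/96}`.
-/

open MeasureTheory ProbabilityTheory Real

noncomputable section

/-- Euclidean norm of a finitely indexed real vector. -/
def pnorm {ι : Type*} [Fintype ι] (x : ι → ℝ) : ℝ := Real.sqrt (∑ i, x i ^ 2)

/-- The set of "signed rows": vectors in `{-1,0,1}^n` with exactly `n/2` zero coordinates. -/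
def signedRow (n : ℕ) : Set (Fin n → ℝ) :=
  {v | (∀ i, v i = -1 ∨ v i = 0 ∨ v i = 1) ∧ Nat.card {i : Fin n // v i = 0} = n / 2}

open Finset

section SignSymmetric

variable {ι : Type*}

def offDiagTerm (v x : ι → ℝ) (p : ι × ι) : ℝ := x p.1 * v p.1 * (x p.2 * v p.2)

lemma offDiagTerm_swap (v x : ι → ℝ) (p : ι × ι) :
    offDiagTerm v x p.swap = offDiagTerm v x p :=
  mul_comm _ _

def sqDiag [Fintype ι] (v x : ι → ℝ) : ℝ := ∑ i, (x i * v i) ^ 2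

lemma sqDiag_sq [Fintype ι] (v x : ι → ℝ) :
    sqDiag v x ^ 2 = ∑ p : ι × ι, offDiagTerm v x p ^ 2 := by
  rw [sqDiag, sq, sum_mul_sum, ← Finset.sum_product']
  simp only [offDiagTerm]
  exact sum_congr rfl fun p _ => by ring

variable [DecidableEq ι]

def flipCoord (i : ι) (x : ι → ℝ) : ι → ℝ := Function.update x i (-x i)

@[simp] lemma flipCoord_apply_self (i : ι) (x : ι → ℝ) : flipCoord i x i = -x i :=
  Function.update_self _ _ _

lemma flipCoord_apply_of_ne {i j : ι} (h : j ≠ i) (x : ι → ℝ) : flipCoord i x j = x j :=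
  Function.update_of_ne h _ _

@[simp] lemma flipCoord_flipCoord (i : ι) (x : ι → ℝ) : flipCoord i (flipCoord i x) = x := by
  simp [flipCoord]

lemma offDiagTerm_flipCoord_fst (v : ι → ℝ) {p : ι × ι} (hp : p.1 ≠ p.2) (x : ι → ℝ) :
    offDiagTerm v (flipCoord p.1 x) p = -offDiagTerm v x p := by
  simp only [offDiagTerm, flipCoord_apply_self, flipCoord_apply_of_ne hp.symm]
  ring

lemma offDiagTerm_flipCoord_of_ne (v : ι → ℝ) {i : ι} {p : ι × ι} (h1 : p.1 ≠ i) (h2 : p.2 ≠ i)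
    (x : ι → ℝ) : offDiagTerm v (flipCoord i x) p = offDiagTerm v x p := by
  simp only [offDiagTerm, flipCoord_apply_of_ne h1, flipCoord_apply_of_ne h2]

def SignSymmetric (A : Finset (ι → ℝ)) : Prop := ∀ i, ∀ x ∈ A, flipCoord i x ∈ A

namespace SignSymmetric

variable {A : Finset (ι → ℝ)} {v : ι → ℝ}

lemma sum_eq_zero (hA : SignSymmetric A) (i : ι) {f : (ι → ℝ) → ℝ}
    (hf : ∀ x, f (flipCoord i x) = -f x) : ∑ x ∈ A, f x = 0 := by
  refine sum_involution (fun x _ => flipCoord i x) (fun x _ => by rw [hf]; ring)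
    (fun x _ hfx hx => hfx ?_) (fun x hx => hA i x hx) (fun x _ => flipCoord_flipCoord i x)
  linarith [hf x, congrArg f hx]

lemma sum_mul_offDiagTerm_eq_zero (hA : SignSymmetric A) {p : ι × ι} (hp : p.1 ≠ p.2)
    (g : (ι → ℝ) → ℝ) (hg : ∀ x, g (flipCoord p.1 x) = g x) :
    ∑ x ∈ A, g x * offDiagTerm v x p = 0 :=
  hA.sum_eq_zero p.1 fun x => by rw [hg, offDiagTerm_flipCoord_fst v hp, mul_neg]

lemma sum_offDiagTerm_mul_offDiagTerm (hA : SignSymmetric A) {p q : ι × ι}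
    (hq : q.1 ≠ q.2) (hqp : q ≠ p) (hqp' : q ≠ p.swap) :
    ∑ x ∈ A, offDiagTerm v x p * offDiagTerm v x q = 0 := by
  -- some index of `q` occurs only once among `p.1, p.2, q.1, q.2`; flipping it changes the sign
  by_cases h : q.1 = p.1 ∨ q.1 = p.2
  · have h1 : p.1 ≠ q.2 := by grind [Prod.ext_iff, Prod.fst_swap, Prod.snd_swap]
    have h2 : p.2 ≠ q.2 := by grind [Prod.ext_iff]
    simpa only [offDiagTerm_swap] using hA.sum_mul_offDiagTerm_eq_zero (p := q.swap) hq.symm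
      (offDiagTerm v · p) fun x => offDiagTerm_flipCoord_of_ne v h1 h2 x
  · push Not at h
    exact hA.sum_mul_offDiagTerm_eq_zero hq _
      fun x => offDiagTerm_flipCoord_of_ne v h.1.symm h.2.symm x

end SignSymmetric

variable [Fintype ι]

def sqOffDiag (v x : ι → ℝ) : ℝ := ∑ p ∈ univ.offDiag, offDiagTerm v x p

lemma dotProduct_sq_eq_sqDiag_add_sqOffDiag (v x : ι → ℝ) :
    (x ⬝ᵥ v) ^ 2 = sqDiag v x + sqOffDiag v x := by
  rw [dotProduct, sq, sum_mul_sum, ← sum_product', ← diag_union_offDiag,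
    sum_union (disjoint_diag_offDiag _), sum_diag, sqDiag, sqOffDiag]
  simp only [offDiagTerm, sq]

@[simp] lemma sqDiag_flipCoord (v : ι → ℝ) (i : ι) (x : ι → ℝ) :
    sqDiag v (flipCoord i x) = sqDiag v x := by
  refine sum_congr rfl fun j _ => ?_
  rcases eq_or_ne j i with rfl | hj
  · simp [neg_mul]
  · rw [flipCoord_apply_of_ne hj]

namespace SignSymmetric

variable {A : Finset (ι → ℝ)} {v : ι → ℝ}

lemma sum_sqDiag_mul_sqOffDiag (hA : SignSymmetric A) :
    ∑ x ∈ A, sqDiag v x * sqOffDiag v x = 0 := by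
  simp only [sqOffDiag, mul_sum]
  rw [sum_comm]
  exact Finset.sum_eq_zero fun p hp =>
    hA.sum_mul_offDiagTerm_eq_zero (mem_offDiag.1 hp).2.2 _ fun x => sqDiag_flipCoord v _ x

lemma sum_offDiagTerm_mul_sqOffDiag (hA : SignSymmetric A) {p : ι × ι} (hp : p ∈ univ.offDiag) :
    ∑ x ∈ A, offDiagTerm v x p * sqOffDiag v x = 2 * ∑ x ∈ A, offDiagTerm v x p ^ 2 := by
  have hp12 := (mem_offDiag.1 hp).2.2
  have hswap : p.swap ∈ univ.offDiag := by simpa using hp12.symm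
  have hne : p ≠ p.swap := fun h => hp12 (congrArg Prod.fst h)
  simp only [sqOffDiag, mul_sum]
  rw [sum_comm, ← sum_subset (s₁ := {p, p.swap}) (by simp [insert_subset_iff, hp, hswap]),
    sum_pair hne]
  · simp only [offDiagTerm_swap, sq, two_mul]
    exact sum_add_distrib.symm
  · intro q hq hq'
    simp only [mem_insert, mem_singleton, not_or] at hq'
    exact hA.sum_offDiagTerm_mul_offDiagTerm (mem_offDiag.1 hq).2.2 hq'.1 hq'.2

lemma sum_sqOffDiag_sq_le (hA : SignSymmetric A) :
    ∑ x ∈ A, sqOffDiag v x ^ 2 ≤ 2 * ∑ x ∈ A, sqDiag v x ^ 2 := by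
  calc ∑ x ∈ A, sqOffDiag v x ^ 2
      = ∑ p ∈ univ.offDiag, ∑ x ∈ A, offDiagTerm v x p * sqOffDiag v x := by
        simp only [sq, sqOffDiag, sum_mul]
        exact sum_comm
    _ = 2 * ∑ x ∈ A, ∑ p ∈ univ.offDiag, offDiagTerm v x p ^ 2 := by
        rw [sum_congr rfl fun p hp => hA.sum_offDiagTerm_mul_sqOffDiag hp, ← mul_sum, sum_comm]
    _ ≤ 2 * ∑ x ∈ A, sqDiag v x ^ 2 := by
        simp only [sqDiag_sq]
        gcongr with x
        exact subset_univ _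

lemma sum_dotProduct_sq (hA : SignSymmetric A) :
    ∑ x ∈ A, (x ⬝ᵥ v) ^ 2 = ∑ x ∈ A, sqDiag v x := by
  have hoff : ∑ x ∈ A, sqOffDiag v x = 0 := by
    simp only [sqOffDiag]
    rw [sum_comm]
    exact Finset.sum_eq_zero fun p hp => by
      simpa using hA.sum_mul_offDiagTerm_eq_zero (v := v) (mem_offDiag.1 hp).2.2 1 fun _ => rfl
  simp only [dotProduct_sq_eq_sqDiag_add_sqOffDiag, sum_add_distrib, hoff, add_zero]

lemma sum_dotProduct_pow_four_le (hA : SignSymmetric A) :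
    ∑ x ∈ A, (x ⬝ᵥ v) ^ 4 ≤ 3 * ∑ x ∈ A, sqDiag v x ^ 2 := by
  have hexp : ∀ x, (x ⬝ᵥ v) ^ 4
      = sqDiag v x ^ 2 + 2 * (sqDiag v x * sqOffDiag v x) + sqOffDiag v x ^ 2 := fun x => by
    rw [show (4 : ℕ) = 2 * 2 from rfl, pow_mul, dotProduct_sq_eq_sqDiag_add_sqOffDiag]; ring
  simp only [hexp, sum_add_distrib, ← mul_sum, hA.sum_sqDiag_mul_sqOffDiag]
  linarith [hA.sum_sqOffDiag_sq_le (v := v)]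

end SignSymmetric

end SignSymmetric

lemma Real.exp_neg_le_one_sub_add_sq {t : ℝ} (ht : 0 ≤ t) : exp (-t) ≤ 1 - t + t ^ 2 := by
  have h : exp (-t) * (1 + t) ≤ 1 := by
    rw [exp_neg, inv_mul_le_iff₀ (exp_pos t), mul_one]
    linarith [add_one_le_exp t]
  nlinarith [exp_pos (-t)]

lemma integral_uniformOn_finset {α : Type*} [MeasurableSpace α] [MeasurableSingletonClass α]
    (s : Finset α) (f : α → ℝ) : ∫ x, f x ∂uniformOn (s : Set α) = (∑ x ∈ s, f x) / #s := by
  rw [uniformOn, ProbabilityTheory.cond, integral_smul_measure, setIntegral_finset]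
  · simp [div_eq_inv_mul]
  · rw [← Set.biUnion_of_singleton (s : Set α), integrableOn_finite_biUnion s.finite_toSet]
    exact fun x _ => integrableOn_singleton (hx := by simp)

lemma measureReal_sum_le_le_exp_mul_prod_mgf {ι Ω : Type*} [Fintype ι] [MeasurableSpace Ω]
    {P : Measure Ω} [IsProbabilityMeasure P] {X : ι → Ω → ℝ} (hind : iIndepFun X P)
    (hmeas : ∀ i, Measurable (X i)) (hX : ∀ i ω, 0 ≤ X i ω) {t : ℝ} (ht : 0 ≤ t) (a : ℝ) :
    P.real {ω | ∑ i, X i ω ≤ a} ≤ exp (t * a) * ∏ i, mgf (X i) P (-t) := by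
  have hint : Integrable (fun ω => exp (-t * (∑ i, X i) ω)) P := by
    refine Integrable.of_bound (by fun_prop) 1 (ae_of_all _ fun ω => ?_)
    rw [norm_eq_abs, abs_exp, exp_le_one_iff, Finset.sum_apply]
    exact mul_nonpos_of_nonpos_of_nonneg (neg_nonpos.2 ht) (sum_nonneg fun i _ => hX i ω)
  have := measure_le_le_exp_mul_mgf a (neg_nonpos.2 ht) hint
  rw [hind.mgf_sum hmeas, neg_neg] at this
  simpa only [Finset.sum_apply] using this

section SignedRow

variable {n : ℕ}

lemma signedRow_finite (n : ℕ) : (signedRow n).Finite :=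
  (Set.Finite.pi fun _ => Set.toFinite ({-1, 0, 1} : Set ℝ)).subset fun _ hx i _ => hx.1 i

def signedRowFinset (n : ℕ) : Finset (Fin n → ℝ) := (signedRow_finite n).toFinset

@[simp] lemma mem_signedRowFinset {x : Fin n → ℝ} : x ∈ signedRowFinset n ↔ x ∈ signedRow n :=
  Set.Finite.mem_toFinset _

lemma coe_signedRowFinset (n : ℕ) : (signedRowFinset n : Set (Fin n → ℝ)) = signedRow n :=
  Set.Finite.coe_toFinset _

lemma sq_le_one_of_mem_signedRow {x : Fin n → ℝ} (hx : x ∈ signedRow n) (i : Fin n) :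
    x i ^ 2 ≤ 1 := by
  rcases hx.1 i with h | h | h <;> simp [h]

lemma comp_perm_mem_signedRow {x : Fin n → ℝ} (hx : x ∈ signedRow n) (σ : Equiv.Perm (Fin n)) :
    x ∘ σ ∈ signedRow n :=
  ⟨fun j => hx.1 (σ j), hx.2 ▸ Nat.card_congr (σ.subtypeEquiv fun _ => Iff.rfl)⟩

lemma flipCoord_mem_signedRow {x : Fin n → ℝ} (hx : x ∈ signedRow n) (i : Fin n) :
    flipCoord i x ∈ signedRow n := by
  have hzero : ∀ j, flipCoord i x j = 0 ↔ x j = 0 := fun j => by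
    rcases eq_or_ne j i with rfl | hj
    · simp
    · rw [flipCoord_apply_of_ne hj]
  refine ⟨fun j => ?_, hx.2 ▸ Nat.card_congr (Equiv.subtypeEquivRight hzero)⟩
  rcases eq_or_ne j i with rfl | hj
  · rcases hx.1 j with h | h | h <;> simp [h]
  · rw [flipCoord_apply_of_ne hj]; exact hx.1 j

lemma signSymmetric_signedRowFinset (n : ℕ) : SignSymmetric (signedRowFinset n) :=
  fun i _ hx => mem_signedRowFinset.2 (flipCoord_mem_signedRow (mem_signedRowFinset.1 hx) i)

lemma sum_sq_of_mem_signedRow (hn : Even n) {x : Fin n → ℝ} (hx : x ∈ signedRow n) :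
    ∑ j, x j ^ 2 = n / 2 := by
  have hsq : ∀ j, x j ^ 2 = 1 - if x j = 0 then 1 else 0 := fun j => by
    rcases hx.1 j with h | h | h <;> simp [h]
  have hzeros : #{j | x j = 0} = n / 2 := by
    rw [← hx.2, Nat.card_eq_fintype_card, Fintype.card_subtype]
  obtain ⟨k, rfl⟩ := hn
  simp only [hsq, sum_sub_distrib, sum_const, card_univ, Fintype.card_fin, nsmul_eq_mul, mul_one,
    sum_boole, hzeros]
  rw [show (k + k) / 2 = k by omega]
  push_cast
  ring

lemma sum_coord_sq_signedRowFinset (hn : Even n) (i : Fin n) :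
    ∑ x ∈ signedRowFinset n, x i ^ 2 = #(signedRowFinset n) / 2 := by
  set S := signedRowFinset n
  have hperm : ∀ j, ∑ x ∈ S, x j ^ 2 = ∑ x ∈ S, x i ^ 2 := fun j => by
    refine sum_nbij' (· ∘ Equiv.swap i j) (· ∘ Equiv.swap i j) ?_ ?_ ?_ ?_ ?_
    all_goals intro x hx
    · simpa [S] using comp_perm_mem_signedRow (mem_signedRowFinset.1 hx) _
    · simpa [S] using comp_perm_mem_signedRow (mem_signedRowFinset.1 hx) _
    all_goals simp [Function.comp_def]
  have hn0 : (n : ℝ) ≠ 0 := Nat.cast_ne_zero.2 (Fin.pos i).ne'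
  have key : n * ∑ x ∈ S, x i ^ 2 = n * (#S / 2) := by
    calc n * ∑ x ∈ S, x i ^ 2 = ∑ j : Fin n, ∑ x ∈ S, x j ^ 2 := by simp [hperm]
      _ = ∑ x ∈ S, ∑ j, x j ^ 2 := sum_comm
      _ = n * (#S / 2) := by
        rw [sum_congr rfl fun x hx => sum_sq_of_mem_signedRow hn (mem_signedRowFinset.1 hx)]
        simp only [sum_const, nsmul_eq_mul]
        ring
  exact mul_left_cancel₀ hn0 key

variable {v : Fin n → ℝ}

lemma sqDiag_le_one (hv : ∑ i, v i ^ 2 = 1) {x : Fin n → ℝ} (hx : x ∈ signedRow n) :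
    sqDiag v x ≤ 1 :=
  hv ▸ sum_le_sum fun i _ => by
    rw [mul_pow]
    exact mul_le_of_le_one_left (sq_nonneg _) (sq_le_one_of_mem_signedRow hx i)

lemma sum_sqDiag_signedRowFinset (hn : Even n) (hv : ∑ i, v i ^ 2 = 1) :
    ∑ x ∈ signedRowFinset n, sqDiag v x = #(signedRowFinset n) / 2 := by
  simp only [sqDiag, mul_pow]
  rw [sum_comm]
  simp only [← sum_mul, sum_coord_sq_signedRowFinset hn]
  rw [← mul_sum, hv, mul_one]

lemma sum_dotProduct_sq_signedRowFinset (hn : Even n) (hv : ∑ i, v i ^ 2 = 1) :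
    ∑ x ∈ signedRowFinset n, (x ⬝ᵥ v) ^ 2 = #(signedRowFinset n) / 2 := by
  rw [(signSymmetric_signedRowFinset n).sum_dotProduct_sq, sum_sqDiag_signedRowFinset hn hv]

lemma sum_dotProduct_pow_four_signedRowFinset_le (hn : Even n) (hv : ∑ i, v i ^ 2 = 1) :
    ∑ x ∈ signedRowFinset n, (x ⬝ᵥ v) ^ 4 ≤ 3 * (#(signedRowFinset n) / 2) := by
  have hsq : ∑ x ∈ signedRowFinset n, sqDiag v x ^ 2 ≤ ∑ x ∈ signedRowFinset n, sqDiag v x :=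
    sum_le_sum fun x hx => by
      have hx1 := sqDiag_le_one hv (mem_signedRowFinset.1 hx)
      have hx0 : 0 ≤ sqDiag v x := sum_nonneg fun i _ => sq_nonneg _
      nlinarith
  calc ∑ x ∈ signedRowFinset n, (x ⬝ᵥ v) ^ 4
      ≤ 3 * ∑ x ∈ signedRowFinset n, sqDiag v x ^ 2 :=
        (signSymmetric_signedRowFinset n).sum_dotProduct_pow_four_le
    _ ≤ 3 * (#(signedRowFinset n) / 2) := by
        rw [← sum_sqDiag_signedRowFinset hn hv]
        gcongr


lemma mgf_dotProduct_sq_uniformOn_signedRow_le (hn : Even n) (hv : ∑ i, v i ^ 2 = 1) {t : ℝ}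
    (ht : 0 ≤ t) :
    mgf (fun x => (x ⬝ᵥ v) ^ 2) (uniformOn (signedRow n)) (-t) ≤ 1 - t / 2 + 3 / 2 * t ^ 2 := by
  rw [mgf, ← coe_signedRowFinset, integral_uniformOn_finset]
  refine div_le_of_le_mul₀ (Nat.cast_nonneg _) (by nlinarith) ?_
  have hpoint : ∀ x : Fin n → ℝ, exp (-t * (x ⬝ᵥ v) ^ 2)
      ≤ 1 - t * (x ⬝ᵥ v) ^ 2 + t ^ 2 * (x ⬝ᵥ v) ^ 4 := fun x => by
    have := exp_neg_le_one_sub_add_sq (mul_nonneg ht (sq_nonneg (x ⬝ᵥ v)))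
    rw [neg_mul]
    linarith
  calc ∑ x ∈ signedRowFinset n, exp (-t * (x ⬝ᵥ v) ^ 2)
      ≤ ∑ x ∈ signedRowFinset n, (1 - t * (x ⬝ᵥ v) ^ 2 + t ^ 2 * (x ⬝ᵥ v) ^ 4) :=
        sum_le_sum fun x _ => hpoint x
    _ = #(signedRowFinset n) - t * ∑ x ∈ signedRowFinset n, (x ⬝ᵥ v) ^ 2
          + t ^ 2 * ∑ x ∈ signedRowFinset n, (x ⬝ᵥ v) ^ 4 := by
        simp [sum_add_distrib, sum_sub_distrib, mul_sum]
    _ ≤ (1 - t / 2 + 3 / 2 * t ^ 2) * #(signedRowFinset n) := by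
        rw [sum_dotProduct_sq_signedRowFinset hn hv]
        nlinarith [sum_dotProduct_pow_four_signedRowFinset_le hn hv, sq_nonneg t]

lemma measureReal_sum_dotProduct_sq_le_le {m : ℕ} (hn : Even n) {Ω : Type*} [MeasurableSpace Ω]
    {P : Measure Ω} [IsProbabilityMeasure P] {Y : Fin m → Ω → Fin n → ℝ}
    (hmeas : ∀ i, Measurable (Y i)) (hind : iIndepFun Y P)
    (hmap : ∀ i, P.map (Y i) = uniformOn (signedRow n)) (hv : ∑ i, v i ^ 2 = 1) (a : ℝ) :
    P.real {ω | ∑ i, (Y i ω ⬝ᵥ v) ^ 2 ≤ a} ≤ exp (a / 6 - m / 24) := by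
  set f : (Fin n → ℝ) → ℝ := fun x => (x ⬝ᵥ v) ^ 2
  have hf : Measurable f := by fun_prop
  have hrow : ∀ i, mgf (f ∘ Y i) P (-(1 / 6)) ≤ exp (-(1 / 24)) := fun i => by
    rw [← mgf_map (hmeas i).aemeasurable (by fun_prop), hmap i]
    refine (mgf_dotProduct_sq_uniformOn_signedRow_le hn hv (by norm_num)).trans ?_
    linarith [add_one_le_exp (-(1 / 24))]
  refine (measureReal_sum_le_le_exp_mul_prod_mgf (hind.comp (fun _ => f) fun _ => hf)
    (fun i => hf.comp (hmeas i)) (fun _ _ => sq_nonneg _) (by norm_num : (0 : ℝ) ≤ 1 / 6) a).trans ?_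
  calc exp (1 / 6 * a) * ∏ i, mgf (f ∘ Y i) P (-(1 / 6))
      ≤ exp (1 / 6 * a) * exp (-(1 / 24)) ^ m := by
        gcongr
        exact (prod_le_prod (fun i _ => mgf_nonneg) fun i _ => hrow i).trans_eq (by simp)
    _ = exp (a / 6 - m / 24) := by rw [← exp_nat_mul, ← exp_add]; ring_nf

end SignedRow

lemma pnorm_le_iff {ι : Type*} [Fintype ι] {x : ι → ℝ} {c : ℝ} (hc : 0 ≤ c) :
    pnorm x ≤ c ↔ ∑ i, x i ^ 2 ≤ c ^ 2 :=
  sqrt_le_left hc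

/-- there is an absolute constant `c₄ > 0` such that for every even `n`,
every `m × n` random matrix `M` (`n/2 ≤ m ≤ n`) with independent rows uniform on the
signed rows, and every fixed unit vector `v`, `P(‖Mv‖₂ ≤ √n/4) ≤ 2 e^{−c₄ n}`. -/
theorem stmt6 :
    ∃ c₄ : ℝ, 0 < c₄ ∧
    ∀ n m : ℕ, 0 < n → Even n → n / 2 ≤ m → m ≤ n →
    ∀ (Ω : Type) (_ : MeasurableSpace Ω) (P : Measure Ω), IsProbabilityMeasure P →
    ∀ M : Ω → Matrix (Fin m) (Fin n) ℝ,
      (∀ i, Measurable fun ω => M ω i) →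
      iIndepFun (fun i ω => M ω i) P →
      (∀ i, Measure.map (fun ω => M ω i) P = uniformOn (signedRow n)) →
    ∀ v : Fin n → ℝ, pnorm v = 1 →
      P {ω | pnorm ((M ω).mulVec v) ≤ Real.sqrt n / 4} ≤
        ENNReal.ofReal (2 * Real.exp (-c₄ * n)) := by
  refine ⟨1 / 96, by norm_num, ?_⟩
  intro n m _ hn hm _ Ω _ P _ M hmeas hind hmap v hv
  have hm' : (n : ℝ) / 2 ≤ m := by
    have := Nat.cast_div_charZero (K := ℝ) hn.two_dvd
    push_cast at this
    exact this ▸ Nat.cast_le.2 hm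
  have hevent : {ω | pnorm ((M ω).mulVec v) ≤ √n / 4} = {ω | ∑ i, (M ω i ⬝ᵥ v) ^ 2 ≤ n / 16} := by
    ext ω
    rw [Set.mem_ofPred_eq, pnorm_le_iff (by positivity), div_pow, sq_sqrt n.cast_nonneg]
    norm_num [Matrix.mulVec]
  rw [hevent, ← ofReal_measureReal]
  refine ENNReal.ofReal_le_ofReal ((measureReal_sum_dotProduct_sq_le_le hn hmeas hind hmap
    (sqrt_eq_one.1 hv) _).trans ?_)
  nlinarith [exp_le_exp.2 (by linarith : (n : ℝ) / 16 / 6 - m / 24 ≤ -(1 / 96) * n),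
    exp_pos (-(1 / 96) * n)]

end
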